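/- Let σ̂ = K^2 σ̄ be conformal metrics on a Riemannian 2-manifold with K > 0 satisfying ∇̂_a∇̂_b K = (1/2)(Δ̂K) σ̂_{ab} (traceless Hessian of K vanishes for σ̂). Then for any smooth function f: ∇̂_a∇̂_b(Kf) - (1/2)Δ̂(Kf) σ̂_{ab} = K(∇̄_a∇̄_b f - (1/2)(Δ̄ f) σ̄_{ab}), i.e. the traceless Hessian transforms conformally with weight K. -/

import Mathlib

open Real
noncomputable section

/-- Points of a local coordinate chart of a Riemannian 2-manifold. -/
abbrev Pt := Fin 2 → ℝ

/-- Partial derivative `∂_a f`. -/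
def pd (a : Fin 2) (f : Pt → ℝ) (x : Pt) : ℝ := fderiv ℝ f x (Pi.single a 1)

/-- Determinant of a metric `g` in local coordinates. -/
def detg (g : Pt → Fin 2 → Fin 2 → ℝ) (x : Pt) : ℝ :=
  g x 0 0 * g x 1 1 - g x 0 1 * g x 1 0

/-- Inverse metric `g^{ab}`. -/
def ginv (g : Pt → Fin 2 → Fin 2 → ℝ) (x : Pt) (a b : Fin 2) : ℝ :=
  (if a = 0 ∧ b = 0 then g x 1 1
   else if a = 1 ∧ b = 1 then g x 0 0
   else if a = 0 ∧ b = 1 then -(g x 0 1)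
   else -(g x 1 0)) / detg g x

/-- The area 2-form `ε_{ab}` of an oriented metric `g`. -/
def areaG (g : Pt → Fin 2 → Fin 2 → ℝ) (x : Pt) (a b : Fin 2) : ℝ :=
  Real.sqrt (detg g x) *
    (if a = 0 ∧ b = 1 then 1 else if a = 1 ∧ b = 0 then -1 else 0)

/-- Christoffel symbols `Γ^c_{ab}` of `g`. -/
def GamG (g : Pt → Fin 2 → Fin 2 → ℝ) (c a b : Fin 2) (x : Pt) : ℝ :=
  (1/2) * ∑ d, ginv g x c d *
    (pd a (fun y => g y d b) x + pd b (fun y => g y d a) x - pd d (fun y => g y a b) x)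

/-- Covariant derivative `∇_a ω_b` of a covector field. -/
def cdCovG (g : Pt → Fin 2 → Fin 2 → ℝ) (ω : Pt → Fin 2 → ℝ) (x : Pt) (a b : Fin 2) : ℝ :=
  pd a (fun y => ω y b) x - ∑ c, GamG g c a b x * ω x c

/-- Covariant derivative `∇_a T_{bc}` of a (0,2)-tensor. -/
def cdT2G (g : Pt → Fin 2 → Fin 2 → ℝ) (T : Pt → Fin 2 → Fin 2 → ℝ)
    (x : Pt) (a b c : Fin 2) : ℝ :=
  pd a (fun y => T y b c) x - ∑ d, GamG g d a b x * T x d c - ∑ d, GamG g d a c x * T x b d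

/-- Covariant Hessian `∇_a ∇_b f` with respect to `g`. -/
def hessG (g : Pt → Fin 2 → Fin 2 → ℝ) (f : Pt → ℝ) (x : Pt) (a b : Fin 2) : ℝ :=
  cdCovG g (fun y c => pd c f y) x a b

/-- Laplace–Beltrami operator `Δ_g f = g^{ab} ∇_a∇_b f`. -/
def lapG (g : Pt → Fin 2 → Fin 2 → ℝ) (f : Pt → ℝ) (x : Pt) : ℝ :=
  ∑ a, ∑ b, ginv g x a b * hessG g f x a b

/-- Divergence `∇^b T_{ab} = g^{bc} ∇_c T_{ab}` of a (0,2)-tensor, upper derivative index. -/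
def divT2G (g : Pt → Fin 2 → Fin 2 → ℝ) (T : Pt → Fin 2 → Fin 2 → ℝ)
    (x : Pt) (a : Fin 2) : ℝ :=
  ∑ b, ∑ c, ginv g x b c * cdT2G g T x c a b

/-- Divergence `∇^a ω_a = g^{ab} ∇_a ω_b` of a covector field. -/
def divCovG (g : Pt → Fin 2 → Fin 2 → ℝ) (ω : Pt → Fin 2 → ℝ) (x : Pt) : ℝ :=
  ∑ a, ∑ b, ginv g x a b * cdCovG g ω x a b

/-- The conformally rescaled metric `σ̂ = K² σ̄`. -/
def cf (K : Pt → ℝ) (g : Pt → Fin 2 → Fin 2 → ℝ) : Pt → Fin 2 → Fin 2 → ℝ :=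
  fun x a b => (K x) ^ 2 * g x a b

/-- A Riemannian metric in local coordinates: smooth, symmetric, positive definite. -/
structure IsMetric (g : Pt → Fin 2 → Fin 2 → ℝ) : Prop where
  smooth : ∀ a b, ContDiff ℝ (⊤ : ℕ∞) (fun x => g x a b)
  symm : ∀ x a b, g x a b = g x b a
  pos00 : ∀ x, 0 < g x 0 0
  posdet : ∀ x, 0 < detg g x


lemma pd_mul (u v : Pt → ℝ) (a : Fin 2) (x : Pt)
    (hu : DifferentiableAt ℝ u x) (hv : DifferentiableAt ℝ v x) :
    pd a (fun y => u y * v y) x = pd a u x * v x + u x * pd a v x := by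
  unfold pd; rw [fderiv_fun_mul hu hv]; simp; ring

lemma pd_add (u v : Pt → ℝ) (a : Fin 2) (x : Pt)
    (hu : DifferentiableAt ℝ u x) (hv : DifferentiableAt ℝ v x) :
    pd a (fun y => u y + v y) x = pd a u x + pd a v x := by
  unfold pd; rw [fderiv_fun_add hu hv]; simp

lemma contDiff_pd (f : Pt → ℝ) (hf : ContDiff ℝ (⊤ : ℕ∞) f) (a : Fin 2) :
    ContDiff ℝ (⊤ : ℕ∞) (pd a f) := by
  unfold pd
  exact (hf.fderiv_right (by simp)).clm_apply contDiff_const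

lemma ginv_cf (g : Pt → Fin 2 → Fin 2 → ℝ) (K : Pt → ℝ) (x : Pt)
    (hK : K x ≠ 0) (hdet : detg g x ≠ 0) (a b : Fin 2) :
    ginv (cf K g) x a b = ginv g x a b / K x ^ 2 := by
  have hd : detg (cf K g) x = K x ^ 4 * detg g x := by unfold detg cf; ring
  unfold ginv
  rw [hd]
  fin_cases a <;> fin_cases b <;> simp [cf] <;> field_simp <;> ring

lemma pd_cf (g : Pt → Fin 2 → Fin 2 → ℝ) (hg : IsMetric g)
    (K : Pt → ℝ) (hKsmooth : ContDiff ℝ (⊤ : ℕ∞) K) (x : Pt) (c i j : Fin 2) :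
    pd c (fun y => cf K g y i j) x
      = 2 * K x * pd c K x * g x i j + K x ^ 2 * pd c (fun y => g y i j) x := by
  have hKd : Differentiable ℝ K := hKsmooth.differentiable (by simp)
  have hgd : Differentiable ℝ (fun y => g y i j) := (hg.smooth i j).differentiable (by simp)
  have h2 : (fun y => cf K g y i j) = fun y => (K y * K y) * g y i j := by
    funext y; simp only [cf]; ring
  rw [h2, pd_mul (fun y => K y * K y) (fun y => g y i j) c x ((hKd x).mul (hKd x)) (hgd x), pd_mul K K c x (hKd x) (hKd x)]
  ring

set_option maxHeartbeats 1600000 in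
lemma Gam_cf (g : Pt → Fin 2 → Fin 2 → ℝ) (hg : IsMetric g)
    (K : Pt → ℝ) (hKpos : ∀ x, 0 < K x) (hKsmooth : ContDiff ℝ (⊤ : ℕ∞) K)
    (c a b : Fin 2) (x : Pt) :
    GamG (cf K g) c a b x
      = GamG g c a b x
        + ((if c = b then pd a K x else 0) + (if c = a then pd b K x else 0)
            - (∑ e, ginv g x c e * pd e K x) * g x a b) / K x := by
  have hK0 : K x ≠ 0 := (hKpos x).ne'
  have hdet : detg g x ≠ 0 := (hg.posdet x).ne'
  have hsymv : g x 1 0 = g x 0 1 := hg.symm x 1 0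
  have hsymf : (fun y => g y 1 0) = (fun y => g y 0 1) := by
    funext y; exact hg.symm y 1 0
  have hdet2 : g x 0 0 * g x 1 1 - g x 0 1 * g x 0 1 ≠ 0 := by
    unfold detg at hdet; rwa [hsymv] at hdet
  have hdet5 : g x 0 0 * g x 1 1 - g x 0 1 ^ 2 ≠ 0 := by
    intro h; apply hdet2; linear_combination h
  fin_cases c <;> fin_cases a <;> fin_cases b <;>
    · simp only [Fin.zero_eta, Fin.mk_one, Fin.isValue]
      simp only [GamG, Fin.sum_univ_two, pd_cf g hg K hKsmooth x,
        ginv_cf g K x hK0 hdet, hsymf]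
      norm_num [ginv, detg, hsymv, hsymf]
      field_simp [hdet2, hdet5]
      have hdet6 : g x 1 1 * g x 0 0 - g x 0 1 ^ 2 ≠ 0 := by
        intro h; apply hdet2; linear_combination h
      ring_nf <;> field_simp [hdet6] <;> ring

lemma hess_prod (G : Pt → Fin 2 → Fin 2 → ℝ) (K f : Pt → ℝ)
    (hK : ContDiff ℝ (⊤ : ℕ∞) K) (hf : ContDiff ℝ (⊤ : ℕ∞) f) (x : Pt) (a b : Fin 2) :
    hessG G (fun y => K y * f y) x a b
      = K x * hessG G f x a b + f x * hessG G K x a b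
        + pd a K x * pd b f x + pd b K x * pd a f x := by
  have hKd : Differentiable ℝ K := hK.differentiable (by simp)
  have hfd : Differentiable ℝ f := hf.differentiable (by simp)
  have hpdK : ∀ c : Fin 2, Differentiable ℝ (pd c K) :=
    fun c => (contDiff_pd K hK c).differentiable (by simp)
  have hpdf : ∀ c : Fin 2, Differentiable ℝ (pd c f) :=
    fun c => (contDiff_pd f hf c).differentiable (by simp)
  have e1 : ∀ c : Fin 2,
      (fun y => pd c (fun z => K z * f z) y) = fun y => pd c K y * f y + K y * pd c f y := by
    intro c; funext y; exact pd_mul K f c y (hKd y) (hfd y)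
  have eA : ∀ a b : Fin 2,
      pd a (fun y => pd b K y * f y + K y * pd b f y) x
        = pd a (pd b K) x * f x + pd b K x * pd a f x
          + (pd a K x * pd b f x + K x * pd a (pd b f) x) := by
    intro a b
    rw [pd_add (fun y => pd b K y * f y) (fun y => K y * pd b f y) a x ((hpdK b x).mul (hfd x)) ((hKd x).mul (hpdf b x)),
      pd_mul (pd b K) f a x (hpdK b x) (hfd x), pd_mul K (pd b f) a x (hKd x) (hpdf b x)]
  simp only [hessG, cdCovG, Fin.sum_univ_two]
  simp only [e1, eA]
  ring

lemma hess_cf (g : Pt → Fin 2 → Fin 2 → ℝ) (hg : IsMetric g)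
    (K : Pt → ℝ) (hKpos : ∀ x, 0 < K x) (hKsmooth : ContDiff ℝ (⊤ : ℕ∞) K)
    (u : Pt → ℝ) (x : Pt) (a b : Fin 2) :
    hessG (cf K g) u x a b
      = hessG g u x a b
        - (pd a K x * pd b u x + pd b K x * pd a u x
            - (∑ c, ∑ e, ginv g x c e * pd e K x * pd c u x) * g x a b) / K x := by
  have hK0 : K x ≠ 0 := (hKpos x).ne'
  simp only [hessG, cdCovG, Fin.sum_univ_two, Gam_cf g hg K hKpos hKsmooth]
  fin_cases a <;> fin_cases b <;>
    · norm_num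
      field_simp
      ring

lemma lap_cf (g : Pt → Fin 2 → Fin 2 → ℝ) (hg : IsMetric g)
    (K : Pt → ℝ) (hKpos : ∀ x, 0 < K x) (hKsmooth : ContDiff ℝ (⊤ : ℕ∞) K)
    (u : Pt → ℝ) (x : Pt) :
    lapG (cf K g) u x = lapG g u x / K x ^ 2 := by
  have hK0 : K x ≠ 0 := (hKpos x).ne'
  have hdet : detg g x ≠ 0 := (hg.posdet x).ne'
  have hsymv : g x 1 0 = g x 0 1 := hg.symm x 1 0
  have hdet2 : g x 0 0 * g x 1 1 - g x 0 1 * g x 0 1 ≠ 0 := by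
    unfold detg at hdet; rwa [hsymv] at hdet
  have hdet5 : g x 0 0 * g x 1 1 - g x 0 1 ^ 2 ≠ 0 := by
    intro h; apply hdet2; linear_combination h
  simp only [lapG, Fin.sum_univ_two, ginv_cf g K x hK0 hdet,
    hess_cf g hg K hKpos hKsmooth u x]
  simp only [ginv, detg, hsymv]
  norm_num
  field_simp [hdet5]
  have hdet6 : g x 1 1 * g x 0 0 - g x 0 1 ^ 2 ≠ 0 := by
    intro h; apply hdet2; linear_combination h
  ring_nf
  field_simp [hdet6]
  ring

lemma lap_prod (g : Pt → Fin 2 → Fin 2 → ℝ) (hg : IsMetric g)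
    (K : Pt → ℝ) (hKpos : ∀ x, 0 < K x) (hKsmooth : ContDiff ℝ (⊤ : ℕ∞) K)
    (f : Pt → ℝ) (hf : ContDiff ℝ (⊤ : ℕ∞) f) (x : Pt) :
    lapG (cf K g) (fun y => K y * f y) x
      = K x * lapG (cf K g) f x + f x * lapG (cf K g) K x
        + 2 * (∑ c, ∑ e, ginv g x c e * pd e K x * pd c f x) / K x ^ 2 := by
  have hK0 : K x ≠ 0 := (hKpos x).ne'
  have hdet : detg g x ≠ 0 := (hg.posdet x).ne'
  have hsymv : g x 1 0 = g x 0 1 := hg.symm x 1 0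
  simp only [lapG, Fin.sum_univ_two, ginv_cf g K x hK0 hdet,
    hess_prod (cf K g) K f hKsmooth hf x]
  simp only [ginv, detg, hsymv]
  norm_num
  field_simp
  ring

/-- if `σ̂ = K² σ̄` with `K > 0` whose traceless Hessian with respect to
`σ̂` vanishes, then for any smooth `f`,
`∇̂_a∇̂_b(Kf) - ½ Δ̂(Kf) σ̂_{ab} = K (∇̄_a∇̄_b f - ½ (Δ̄f) σ̄_{ab})`. -/
theorem conformal_traceless_hessian
    (g : Pt → Fin 2 → Fin 2 → ℝ) (hg : IsMetric g)
    (K : Pt → ℝ) (hKpos : ∀ x, 0 < K x) (hKsmooth : ContDiff ℝ (⊤ : ℕ∞) K)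
    (hKhess : ∀ x a b,
      hessG (cf K g) K x a b = (1/2) * lapG (cf K g) K x * cf K g x a b)
    (f : Pt → ℝ) (hf : ContDiff ℝ (⊤ : ℕ∞) f) :
    ∀ x a b,
      hessG (cf K g) (fun y => K y * f y) x a b
          - (1/2) * lapG (cf K g) (fun y => K y * f y) x * cf K g x a b
        = K x * (hessG g f x a b - (1/2) * lapG g f x * g x a b) := by
  intro x a b
  have hK0 : K x ≠ 0 := (hKpos x).ne'
  rw [hess_prod (cf K g) K f hKsmooth hf x a b,
      hess_cf g hg K hKpos hKsmooth f x a b,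
      lap_prod g hg K hKpos hKsmooth f hf x,
      lap_cf g hg K hKpos hKsmooth f x,
      hKhess x a b]
  simp only [cf]
  field_simp
  ring
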